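/- Let n ≥ 3 and m = (m_1,…,m_n) ∈ ℝ^n with m_0 := 1, and suppose L_P(m) ≥ 0 for all P ∈ 𝒫_n. Then: (i) L_P(m) ≥ 0 for all P ∈ 𝒫_{n−2}; and (ii) if Q ∈ 𝒫_{n−2} satisfies L_Q(m) = 0, then L_{xQ}(m) ≤ 0, where (xQ)(x) := x·Q(x). -/

import Mathlib

/-!
Write `Q ∈ 𝒫_{n-2}` as `∏_{b ∈ S} (X - b)`. For every natural `a` with `a, a + 1 ∉ S`, the
polynomial `(X - a)(X - a - 1) Q` lies in `𝒫_n`, since `(x - a)(x - a - 1) ≥ 0` on `ℕ₀`.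
Hence the quadratic `a ↦ a(a+1) L_Q - (2a+1) L_{XQ} + L_{X²Q}` is nonnegative at arbitrarily
large `a`, which forces its leading coefficient `L_Q` to be nonnegative and, when `L_Q = 0`,
its linear coefficient `-2 L_{XQ}` to be nonnegative.
-/

open Polynomial

/-- `Lf P m = Σ_k p_k m_k`, the affine form associated to a polynomial `P`. -/
noncomputable def Lf (P : Polynomial ℝ) (m : ℕ → ℝ) : ℝ := P.sum fun k a => a * m k

/-- `𝒫_j`: monic real polynomials of degree `j` with `j` distinct roots in `ℕ₀`,
nonnegative on `ℕ₀`. -/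
def PolyP (j : ℕ) (P : Polynomial ℝ) : Prop :=
  P.Monic ∧ P.natDegree = j ∧
    (∃ S : Finset ℕ, S.card = j ∧ P = ∏ a ∈ S, (X - C (a : ℝ))) ∧
    ∀ x : ℕ, 0 ≤ P.eval (x : ℝ)

/-- `(m_1,…,m_j)` (with `m 0 = 1`) is realizable on `ℕ₀`: there is a probability
measure on the nonnegative integers whose `k`-th moment is `m k` for `k ≤ j`. -/
def RealizableN0 (j : ℕ) (m : ℕ → ℝ) : Prop :=
  ∃ μ : ℕ → ℝ, (∀ x, 0 ≤ μ x) ∧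
    ∀ k, k ≤ j → HasSum (fun x : ℕ => (x : ℝ) ^ k * μ x) (m k)

/-- I-realizability on `ℕ₀`. -/
def IRealizable (j : ℕ) (m : ℕ → ℝ) : Prop :=
  RealizableN0 j m ∧ ∀ P : Polynomial ℝ, PolyP j P ∨ PolyP (j - 1) P → 0 < Lf P m

/-- B-realizability on `ℕ₀`. -/
def BRealizable (j : ℕ) (m : ℕ → ℝ) : Prop :=
  RealizableN0 j m ∧ ∃ P : Polynomial ℝ, (PolyP j P ∨ PolyP (j - 1) P) ∧ Lf P m = 0

open Filter

lemma nonneg_of_frequently_nonneg_quadratic {a b c : ℝ}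
    (h : ∃ᶠ x in atTop, 0 ≤ c * x ^ 2 + b * x + a) : 0 ≤ c ∧ (c = 0 → 0 ≤ b) := by
  have not_tendsto_atBot {f : ℝ → ℝ} (hf : ∃ᶠ x in atTop, 0 ≤ f x) :
      ¬ Tendsto f atTop atBot := fun hbot =>
    hf <| (hbot.eventually_lt_atBot 0).mono fun _ hx => not_le.2 hx
  have tendsto_linear {b : ℝ} (hb : b < 0) (a : ℝ) : Tendsto (fun x => b * x + a) atTop atBot :=
    tendsto_atBot_add_const_right _ a (tendsto_id.const_mul_atTop_of_neg hb)
  constructor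
  · by_contra! hc
    refine not_tendsto_atBot h (tendsto_atBot_add_const_right _ a ?_)
    exact (tendsto_id.atTop_mul_atBot₀ (tendsto_linear hc b)).congr fun x => by
      simp only [id]; ring
  · rintro rfl
    by_contra! hb
    exact not_tendsto_atBot (by simpa using h) (tendsto_linear hb a)

section Lf

variable (m : ℕ → ℝ)

lemma Lf_add (P Q : ℝ[X]) : Lf (P + Q) m = Lf P m + Lf Q m := by
  unfold Lf
  rw [sum_add_index] <;> simp [add_mul]

lemma Lf_C_mul (c : ℝ) (P : ℝ[X]) : Lf (C c * P) m = c * Lf P m := by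
  unfold Lf
  rw [← smul_eq_C_mul, sum_smul_index P c _ (by simp)]
  simp [Polynomial.sum, Finset.mul_sum, mul_assoc]

lemma Lf_X_sub_C_mul_X_sub_C_mul (a b : ℝ) (Q : ℝ[X]) :
    Lf ((X - C a) * (X - C b) * Q) m
      = Lf (X ^ 2 * Q) m - (a + b) * Lf (X * Q) m + a * b * Lf Q m := by
  have hexpand : (X - C a) * (X - C b) * Q = X ^ 2 * Q + C (-(a + b)) * (X * Q) + C (a * b) * Q := by
    simp only [map_neg, map_add, map_mul]
    ring
  rw [hexpand, Lf_add, Lf_add, Lf_C_mul, Lf_C_mul]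
  ring

end Lf

lemma sub_mul_sub_succ_nonneg (a x : ℕ) : 0 ≤ ((x : ℝ) - a) * ((x : ℝ) - (a + 1)) := by
  rcases le_or_gt x a with hx | hx
  · have hx' : (x : ℝ) ≤ a := by exact_mod_cast hx
    exact mul_nonneg_of_nonpos_of_nonpos (by linarith) (by linarith)
  · have hx' : (a : ℝ) + 1 ≤ x := by exact_mod_cast hx
    exact mul_nonneg (by linarith) (by linarith)

lemma polyP_card_prod {S : Finset ℕ} (hS : ∀ x : ℕ, 0 ≤ (∏ a ∈ S, (X - C (a : ℝ))).eval (x : ℝ)) :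
    PolyP S.card (∏ a ∈ S, (X - C (a : ℝ))) := by
  refine ⟨monic_prod_of_monic _ _ fun b _ => monic_X_sub_C _, ?_, ⟨S, rfl, rfl⟩, hS⟩
  rw [natDegree_prod_of_monic _ _ fun b _ => monic_X_sub_C _]
  simp only [natDegree_X_sub_C, Finset.sum_const, smul_eq_mul, mul_one]

lemma exists_ge_notMem_succ_notMem (S : Finset ℕ) (r : ℝ) :
    ∃ a : ℕ, r ≤ a ∧ a ∉ S ∧ a + 1 ∉ S := by
  refine ⟨S.sup id + ⌈r⌉₊ + 1, ?_, ?_, ?_⟩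
  · calc r ≤ ⌈r⌉₊ := Nat.le_ceil r
      _ ≤ _ := by exact_mod_cast by omega
  all_goals
    intro hmem
    have := Finset.le_sup (f := id) hmem
    simp only [id] at this
    omega

lemma PolyP.frequently_polyP_mul {j : ℕ} {Q : ℝ[X]} (hQ : PolyP j Q) :
    ∃ᶠ x in atTop, PolyP (j + 2) ((X - C x) * (X - C (x + 1)) * Q) := by
  obtain ⟨S, hScard, rfl⟩ := hQ.2.2.1
  rw [frequently_atTop]
  intro r
  obtain ⟨a, hra, haS, ha1S⟩ := exists_ge_notMem_succ_notMem S r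
  have haS' : a ∉ insert (a + 1) S := by simp [haS]
  have hprod : (X - C (a : ℝ)) * (X - C ((a : ℝ) + 1)) * ∏ b ∈ S, (X - C (b : ℝ))
      = ∏ b ∈ insert a (insert (a + 1) S), (X - C (b : ℝ)) := by
    rw [Finset.prod_insert haS', Finset.prod_insert ha1S, ← mul_assoc]
    push_cast
    ring
  have hcard : (insert a (insert (a + 1) S)).card = j + 2 := by
    rw [Finset.card_insert_of_notMem haS', Finset.card_insert_of_notMem ha1S, hScard]
  refine ⟨a, hra, ?_⟩
  rw [hprod, ← hcard]
  refine polyP_card_prod fun x => ?_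
  rw [← hprod]
  simpa only [eval_mul, eval_sub, eval_X, eval_C] using
    mul_nonneg (sub_mul_sub_succ_nonneg a x) (hQ.2.2.2 x)

theorem posdir_general (n : ℕ) (hn : 3 ≤ n) (m : ℕ → ℝ)
    (h : ∀ P, PolyP n P → 0 ≤ Lf P m) :
    (∀ P, PolyP (n - 2) P → 0 ≤ Lf P m) ∧
      ∀ Q, PolyP (n - 2) Q → Lf Q m = 0 → Lf (X * Q) m ≤ 0 := by
  have hn2 : n - 2 + 2 = n := by omega
  have coeffs_nonneg (Q : ℝ[X]) (hQ : PolyP (n - 2) Q) :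
      0 ≤ Lf Q m ∧ (Lf Q m = 0 → 0 ≤ Lf Q m - 2 * Lf (X * Q) m) := by
    refine nonneg_of_frequently_nonneg_quadratic (a := Lf (X ^ 2 * Q) m - Lf (X * Q) m) ?_
    refine hQ.frequently_polyP_mul.mono fun x hx => ?_
    have hP := h _ (hn2 ▸ hx)
    rw [Lf_X_sub_C_mul_X_sub_C_mul] at hP
    linear_combination hP
  refine ⟨fun P hP => (coeffs_nonneg P hP).1, fun Q hQ hQ0 => ?_⟩
  linarith [(coeffs_nonneg Q hQ).2 hQ0]

/-- Lemma B.1: if `L_P(m) ≥ 0` for all `P ∈ 𝒫_n`, then `L_P(m) ≥ 0` for all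
`P ∈ 𝒫_{n-2}`, and if `Q ∈ 𝒫_{n-2}` has `L_Q(m) = 0` then `L_{xQ}(m) ≤ 0`. -/
theorem posdir (n : ℕ) (hn : 3 ≤ n) (m : ℕ → ℝ) (hm0 : m 0 = 1)
    (h : ∀ P, PolyP n P → 0 ≤ Lf P m) :
    (∀ P, PolyP (n - 2) P → 0 ≤ Lf P m) ∧
      ∀ Q, PolyP (n - 2) Q → Lf Q m = 0 → Lf (X * Q) m ≤ 0 :=
  posdir_general n hn m h
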